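/- Let K be a field and ℓ a prime number different from the characteristic of K. Assume K = K_ℓ ≠ K_{ℓ^∞}, and let t > 0 be the greatest integer such that K = K_{ℓ^t}. Then for every a ∈ K^× exactly one of the following holds: (i) a = b^{ℓ^d} for some integer d ≥ 0 and some strongly indivisible b ∈ K^×; (ii) a = b^{ℓ^d}·ξ for some integer d > 0, some strongly indivisible b ∈ K^×, and some root of unity ξ ∈ K of order ℓ^r with r > max(0, t − d); (iii) aξ is divisible in K for some uniquely determined root of unity ξ ∈ K of ℓ-power order. Moreover, in cases (i) and (ii) the integers d and r do not depend on the choice of b. -/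

import Mathlib

noncomputable section
open IntermediateField Module

def cyclo (K : Type*) [Field K] (m : ℕ) : IntermediateField K (AlgebraicClosure K) :=
  IntermediateField.adjoin K {ζ | IsPrimitiveRoot ζ m}

def cycloInf (K : Type*) [Field K] (ℓ : ℕ) : IntermediateField K (AlgebraicClosure K) :=
  ⨆ m : ℕ, cyclo K (ℓ ^ m)

def kroot (K : Type*) [Field K] (n : ℕ) (a : K) : IntermediateField K (AlgebraicClosure K) :=
  IntermediateField.adjoin K {x | x ^ n = algebraMap K (AlgebraicClosure K) a}

def kummerDeg (K : Type*) [Field K] (m n : ℕ) (a : K) : ℕ :=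
  finrank (cyclo K m) (IntermediateField.adjoin (cyclo K m)
    {x : AlgebraicClosure K | x ^ n = algebraMap K (AlgebraicClosure K) a})

def IsDivisible (K : Type*) [Field K] (ℓ : ℕ) (a : K) : Prop :=
  ∀ n : ℕ, ∃ c : K, c ^ ℓ ^ n = a

def StronglyIndivisible (K : Type*) [Field K] (ℓ : ℕ) (b : K) : Prop :=
  ∀ ξ : K, (∃ k : ℕ, 0 < k ∧ ξ ^ k = 1) → ∀ c : K, c ^ ℓ ≠ b * ξ
/-- Case (i): `a` is an `ℓ^d`-th power of a strongly indivisible element,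
with `d` independent of the choices. -/
def CaseI (K : Type*) [Field K] (ℓ : ℕ) (a : K) : Prop :=
  ∃ d : ℕ, (∃ b : K, StronglyIndivisible K ℓ b ∧ a = b ^ ℓ ^ d) ∧
    ∀ d' : ℕ, ∀ b' : K, StronglyIndivisible K ℓ b' → a = b' ^ ℓ ^ d' → d' = d

/-- Case (ii): `a = b^{ℓ^d}·ξ` with `b` strongly indivisible, `d > 0` and `ξ` a root of
unity of order `ℓ^r` with `r > max(0, t - d)`; `d` and `r` are independent of the choices. -/
def CaseII (K : Type*) [Field K] (ℓ t : ℕ) (a : K) : Prop :=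
  ∃ d r : ℕ, 0 < d ∧ t - d < r ∧
    (∃ b ξ : K, StronglyIndivisible K ℓ b ∧ IsPrimitiveRoot ξ (ℓ ^ r) ∧ a = b ^ ℓ ^ d * ξ) ∧
    ∀ d' r' : ℕ, ∀ b' ξ' : K, 0 < d' → t - d' < r' → StronglyIndivisible K ℓ b' →
      IsPrimitiveRoot ξ' (ℓ ^ r') → a = b' ^ ℓ ^ d' * ξ' → d' = d ∧ r' = r

/-- Case (iii): `aξ` is divisible for a uniquely determined root of unity `ξ ∈ K`
of `ℓ`-power order. -/
def CaseIII (K : Type*) [Field K] (ℓ : ℕ) (a : K) : Prop :=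
  ∃ ξ : K, (∃ r : ℕ, IsPrimitiveRoot ξ (ℓ ^ r)) ∧ IsDivisible K ℓ (a * ξ) ∧
    ∀ ξ' : K, (∃ r : ℕ, IsPrimitiveRoot ξ' (ℓ ^ r)) → IsDivisible K ℓ (a * ξ') → ξ' = ξ

/-!
Let `μ` be the group of `ℓ`-power roots of unity of `K`, cyclic of order `ℓ ^ t`. Since roots of
unity of order prime to `ℓ` are `ℓ`-th powers, `b` is strongly indivisible iff `b ∉ K^ℓ μ`.
If `a ∈ K^{ℓ^n} μ` for every `n`, then `μ^{ℓ^t} = 1` forces the `μ`-components of all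
representations of level `≥ t` to agree; that common component is `ξ⁻¹` of (iii).
Otherwise let `d` be the largest level: `a = b^{ℓ^d} ξ` with `b` strongly indivisible, and any
other such representation has the same `d` and changes `ξ` by an element of
`μ^{ℓ^d} = μ[ℓ^{t-d}]`. So (i) or (ii) holds according as `ξ^{ℓ^{t-d}} = 1` or not; in case (ii)
the order of `ξ` exceeds `ℓ^{t-d}` and is therefore unchanged.
-/

section PrimePowerOrder
variable {M : Type*} [CommMonoid M] {ℓ t : ℕ}

theorem pow_prime_pow_eq_one_of_le {x : M} {u v : ℕ} (h : u ≤ v) (hx : x ^ ℓ ^ u = 1) :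
    x ^ ℓ ^ v = 1 := by
  obtain ⟨k, rfl⟩ := Nat.exists_eq_add_of_le h
  rw [pow_add, pow_mul, hx, one_pow]

theorem pow_prime_pow_pow_sub_eq_one {u : M} (d : ℕ) (hu : u ^ ℓ ^ t = 1) :
    (u ^ ℓ ^ d) ^ ℓ ^ (t - d) = 1 := by
  rw [← pow_mul, ← pow_add]
  exact pow_prime_pow_eq_one_of_le (by omega) hu

theorem exists_isPrimitiveRoot_of_pow_prime_pow_eq_one (hℓ : ℓ.Prime) {x : M} {m : ℕ}
    (hx : x ^ ℓ ^ m = 1) : ∃ r, IsPrimitiveRoot x (ℓ ^ r) := by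
  obtain ⟨r, -, hr⟩ := (Nat.dvd_prime_pow hℓ).mp (orderOf_dvd_of_pow_eq_one hx)
  exact ⟨r, hr ▸ IsPrimitiveRoot.orderOf x⟩

theorem pow_prime_pow_eq_one_of_forall_le (hℓ : ℓ.Prime)
    (htg : ∀ u : ℕ, (∃ ζ : M, IsPrimitiveRoot ζ (ℓ ^ u)) → u ≤ t) {x : M} {m : ℕ}
    (hx : x ^ ℓ ^ m = 1) : x ^ ℓ ^ t = 1 := by
  obtain ⟨r, hr⟩ := exists_isPrimitiveRoot_of_pow_prime_pow_eq_one hℓ hx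
  exact pow_prime_pow_eq_one_of_le (htg r ⟨x, hr⟩) hr.pow_eq_one

theorem IsPrimitiveRoot.mul_of_pow_prime_pow_eq_one (hℓ : ℓ.Prime) {ξ v : M} {r s : ℕ}
    (hξ : IsPrimitiveRoot ξ (ℓ ^ r)) (hv : v ^ ℓ ^ s = 1) (hsr : s < r) :
    IsPrimitiveRoot (ξ * v) (ℓ ^ r) := by
  have hord := IsPrimitiveRoot.iff_orderOf.mp hξ
  rw [IsPrimitiveRoot.iff_orderOf, ← hord]
  refine (Commute.all ξ v).orderOf_mul_eq_left_of_forall_prime_mul_dvd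
    (hξ.isOfFinOrder (pow_ne_zero r hℓ.ne_zero)) fun p hp hpv => ?_
  obtain ⟨j, hjs, hj⟩ := (Nat.dvd_prime_pow hℓ).mp (orderOf_dvd_of_pow_eq_one hv)
  rw [hj] at hpv ⊢
  rw [(Nat.prime_dvd_prime_iff_eq hp hℓ).mp (hp.dvd_of_dvd_pow hpv), hord, ← pow_succ']
  exact pow_dvd_pow ℓ (by omega)

end PrimePowerOrder

section RootsOfUnity
variable {K : Type*} [Field K] {ℓ t : ℕ}

theorem ne_zero_of_pow_eq_one {x : K} {n : ℕ} (hn : n ≠ 0) (hx : x ^ n = 1) : x ≠ 0 :=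
  (pow_ne_zero_iff hn).mp (hx ▸ one_ne_zero)

/-- `a ∈ (K^×)^{ℓ^n} μ_{ℓ^t}` -/
def IsPowModRoots (K : Type*) [Field K] (ℓ t n : ℕ) (a : K) : Prop :=
  ∃ c η : K, η ^ ℓ ^ t = 1 ∧ a = c ^ ℓ ^ n * η

theorem isPowModRoots_zero (a : K) : IsPowModRoots K ℓ t 0 a :=
  ⟨a, 1, one_pow _, by simp⟩

theorem IsPowModRoots.mono {a : K} {m n : ℕ} (hmn : m ≤ n) (h : IsPowModRoots K ℓ t n a) :
    IsPowModRoots K ℓ t m a := by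
  obtain ⟨c, η, hη, rfl⟩ := h
  exact ⟨c ^ ℓ ^ (n - m), η, hη, by rw [← pow_mul, ← pow_add, Nat.sub_add_cancel hmn]⟩

theorem isPowModRoots_one_of_pow_eq_one (hℓ : ℓ.Prime)
    (hμ : ∀ x : K, ∀ m : ℕ, x ^ ℓ ^ m = 1 → x ^ ℓ ^ t = 1)
    {ξ : K} {k : ℕ} (hk : k ≠ 0) (hξ : ξ ^ k = 1) : IsPowModRoots K ℓ t 1 ξ := by
  have hξ0 := ne_zero_of_pow_eq_one hk hξ
  obtain ⟨s, m, hℓm, rfl⟩ := Nat.exists_eq_pow_mul_and_not_dvd hk ℓ hℓ.one_lt.ne'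
  -- `x ℓ^{s+1} + y m = 1` gives `ξ = (ξ^{x ℓ^s})^ℓ ξ^{y m}`, and `(ξ^{y m})^{ℓ^s} = 1`
  obtain ⟨x, y, hxy⟩ : IsCoprime ((ℓ ^ (s + 1) : ℕ) : ℤ) (m : ℤ) :=
    Nat.isCoprime_iff_coprime.mpr (((hℓ.coprime_iff_not_dvd).mpr hℓm).pow_left _)
  refine ⟨ξ ^ (x * ℓ ^ s), ξ ^ (y * m), ?_, ?_⟩
  · refine hμ _ s ?_
    rw [← zpow_natCast, ← zpow_mul, show y * m * ((ℓ ^ s : ℕ) : ℤ) = ((ℓ ^ s * m : ℕ) : ℤ) * y by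
      push_cast; ring, zpow_mul, zpow_natCast, hξ, one_zpow]
  · rw [pow_one, ← zpow_natCast, ← zpow_mul, ← zpow_add₀ hξ0]
    conv_lhs => rw [← zpow_one ξ]
    congr 1
    push_cast at hxy ⊢
    linear_combination -hxy

theorem IsPrimitiveRoot.exists_eq_pow_of_pow_pow_sub_eq_one (hℓ : ℓ.Prime) {ζ ξ : K} {d : ℕ}
    (hζ : IsPrimitiveRoot ζ (ℓ ^ t)) (hξ : ξ ^ ℓ ^ (t - d) = 1) :
    ∃ η : K, η ^ ℓ ^ t = 1 ∧ ξ = η ^ ℓ ^ d := by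
  rcases le_or_gt d t with hdt | hdt
  · have hpow : IsPrimitiveRoot (ζ ^ ℓ ^ d) (ℓ ^ (t - d)) :=
      hζ.pow (pow_pos hℓ.pos t) (by rw [← pow_add, Nat.add_sub_cancel' hdt])
    have : NeZero (ℓ ^ (t - d)) := ⟨pow_ne_zero _ hℓ.ne_zero⟩
    obtain ⟨i, -, rfl⟩ := hpow.eq_pow_of_pow_eq_one hξ
    refine ⟨ζ ^ i, by rw [← pow_mul, mul_comm, pow_mul, hζ.pow_eq_one, one_pow], ?_⟩
    rw [← pow_mul, ← pow_mul, mul_comm]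
  · rw [Nat.sub_eq_zero_of_le hdt.le, pow_zero, pow_one] at hξ
    exact ⟨1, one_pow _, by rw [hξ, one_pow]⟩

theorem stronglyIndivisible_iff (hℓ : ℓ.Prime)
    (hμ : ∀ x : K, ∀ m : ℕ, x ^ ℓ ^ m = 1 → x ^ ℓ ^ t = 1) {b : K} :
    StronglyIndivisible K ℓ b ↔ ¬ IsPowModRoots K ℓ t 1 b := by
  constructor
  · rintro hb ⟨c, η, hη, rfl⟩
    have hη0 := ne_zero_of_pow_eq_one (pow_ne_zero t hℓ.ne_zero) hη
    exact hb η⁻¹ ⟨ℓ ^ t, pow_pos hℓ.pos t, by rw [inv_pow, hη, inv_one]⟩ c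
      (by rw [pow_one]; field_simp)
  · rintro hb ξ ⟨k, hk, hξ⟩ c hc
    have hξ0 := ne_zero_of_pow_eq_one hk.ne' hξ
    obtain ⟨c', η, hη, hξ'⟩ :=
      isPowModRoots_one_of_pow_eq_one hℓ hμ hk.ne' (by rw [inv_pow, hξ, inv_one] : ξ⁻¹ ^ k = 1)
    refine hb ⟨c * c', η, hη, ?_⟩
    rw [pow_one] at hξ' ⊢
    rw [mul_pow, mul_assoc, ← hξ', hc]
    field_simp

namespace StronglyIndivisible

theorem ne_zero (hℓ : ℓ.Prime) {b : K} (hb : StronglyIndivisible K ℓ b) : b ≠ 0 := by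
  rintro rfl
  exact hb 1 ⟨1, one_pos, one_pow 1⟩ 0 (by rw [zero_pow hℓ.ne_zero, zero_mul])

theorem mul_of_pow_eq_one {b η : K} (hb : StronglyIndivisible K ℓ b) {k : ℕ} (hk : 0 < k)
    (hη : η ^ k = 1) : StronglyIndivisible K ℓ (b * η) := by
  rintro ρ ⟨k', hk', hρ⟩ c hc
  refine hb (η * ρ) ⟨k * k', Nat.mul_pos hk hk', ?_⟩ c (by rw [hc, mul_assoc])
  rw [mul_pow, pow_mul, hη, one_pow, one_mul, mul_comm k k', pow_mul, hρ, one_pow]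

theorem not_isPowModRoots_succ (hℓ : ℓ.Prime)
    (hμ : ∀ x : K, ∀ m : ℕ, x ^ ℓ ^ m = 1 → x ^ ℓ ^ t = 1) {b ξ : K}
    (hb : StronglyIndivisible K ℓ b) (hξ : ξ ^ ℓ ^ t = 1) (d : ℕ) :
    ¬ IsPowModRoots K ℓ t (d + 1) (b ^ ℓ ^ d * ξ) := by
  rintro ⟨c, η, hη, h⟩
  have hξ0 := ne_zero_of_pow_eq_one (pow_ne_zero t hℓ.ne_zero) hξ
  have hc0 : c ≠ 0 := by
    rintro rfl
    rw [zero_pow (pow_ne_zero _ hℓ.ne_zero), zero_mul] at h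
    exact mul_ne_zero (pow_ne_zero _ (hb.ne_zero hℓ)) hξ0 h
  -- `b / c ^ ℓ` is an `ℓ`-power root of unity, so `b ∈ K^ℓ μ`
  have hw : (b / c ^ ℓ) ^ ℓ ^ d = η / ξ := by
    rw [div_pow, ← pow_mul, ← pow_succ', eq_div_iff hξ0, div_mul_eq_mul_div, h]
    field_simp
  refine (stronglyIndivisible_iff hℓ hμ).mp hb ⟨c, b / c ^ ℓ, hμ _ (d + t) ?_,
    by rw [pow_one]; field_simp⟩
  rw [pow_add, pow_mul, hw, div_pow, hη, hξ, div_one]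

theorem le_of_isPowModRoots (hℓ : ℓ.Prime)
    (hμ : ∀ x : K, ∀ m : ℕ, x ^ ℓ ^ m = 1 → x ^ ℓ ^ t = 1) {b ξ : K} {d n : ℕ}
    (hb : StronglyIndivisible K ℓ b) (hξ : ξ ^ ℓ ^ t = 1)
    (h : IsPowModRoots K ℓ t n (b ^ ℓ ^ d * ξ)) : n ≤ d := by
  by_contra! hdn
  exact hb.not_isPowModRoots_succ hℓ hμ hξ d (h.mono hdn)

end StronglyIndivisible

theorem exists_eq_mul_pow_of_pow_mul_eq_pow_mul
    (hμ : ∀ x : K, ∀ m : ℕ, x ^ ℓ ^ m = 1 → x ^ ℓ ^ t = 1) {b b' ξ ξ' : K} {d : ℕ}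
    (hb' : b' ≠ 0) (hξ : ξ ^ ℓ ^ t = 1) (hξ' : ξ' ^ ℓ ^ t = 1)
    (h : b ^ ℓ ^ d * ξ = b' ^ ℓ ^ d * ξ') : ∃ u : K, u ^ ℓ ^ t = 1 ∧ ξ' = ξ * u ^ ℓ ^ d := by
  have hu : (b / b') ^ ℓ ^ d * ξ = ξ' := by
    rw [div_pow, div_mul_eq_mul_div, h]
    field_simp
  refine ⟨b / b', hμ _ (d + t) ?_, by rw [← hu, mul_comm]⟩
  have := congrArg (· ^ ℓ ^ t) hu
  simp only [mul_pow, hξ, hξ', mul_one] at this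
  rwa [pow_add, pow_mul]

theorem StronglyIndivisible.eq_and_exists_of_pow_mul_eq_pow_mul (hℓ : ℓ.Prime)
    (hμ : ∀ x : K, ∀ m : ℕ, x ^ ℓ ^ m = 1 → x ^ ℓ ^ t = 1) {b b' ξ ξ' : K} {d d' : ℕ}
    (hb : StronglyIndivisible K ℓ b) (hb' : StronglyIndivisible K ℓ b')
    (hξ : ξ ^ ℓ ^ t = 1) (hξ' : ξ' ^ ℓ ^ t = 1) (h : b ^ ℓ ^ d * ξ = b' ^ ℓ ^ d' * ξ') :
    d' = d ∧ ∃ u : K, u ^ ℓ ^ t = 1 ∧ ξ' = ξ * u ^ ℓ ^ d := by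
  obtain rfl : d' = d := le_antisymm (hb.le_of_isPowModRoots hℓ hμ hξ ⟨b', ξ', hξ', h⟩)
    (hb'.le_of_isPowModRoots hℓ hμ hξ' ⟨b, ξ, hξ, h.symm⟩)
  exact ⟨rfl, exists_eq_mul_pow_of_pow_mul_eq_pow_mul hμ (hb'.ne_zero hℓ) hξ hξ' h⟩

theorem exists_stronglyIndivisible_of_not_forall_isPowModRoots (hℓ : ℓ.Prime)
    (hμ : ∀ x : K, ∀ m : ℕ, x ^ ℓ ^ m = 1 → x ^ ℓ ^ t = 1) {a : K}
    (h : ¬ ∀ n, IsPowModRoots K ℓ t n a) :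
    ∃ d b ξ, StronglyIndivisible K ℓ b ∧ ξ ^ ℓ ^ t = 1 ∧ a = b ^ ℓ ^ d * ξ := by
  obtain ⟨d, ⟨b, ξ, hξ, rfl⟩, hd⟩ :
      ∃ d, IsPowModRoots K ℓ t d a ∧ ¬ IsPowModRoots K ℓ t (d + 1) a := by
    by_contra! hstep
    exact h fun n => Nat.rec (motive := fun n => IsPowModRoots K ℓ t n a)
      (isPowModRoots_zero a) hstep n
  refine ⟨d, b, ξ, (stronglyIndivisible_iff hℓ hμ).mpr ?_, hξ, rfl⟩
  rintro ⟨c, η, hη, rfl⟩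
  refine hd ⟨c, η ^ ℓ ^ d * ξ, ?_, ?_⟩
  · rw [mul_pow, hξ, mul_one, ← pow_mul, mul_comm, pow_mul, hη, one_pow]
  · rw [mul_pow, ← pow_mul, ← pow_add, add_comm, mul_assoc]

theorem caseIII_iff (hℓ : ℓ.Prime)
    (hμ : ∀ x : K, ∀ m : ℕ, x ^ ℓ ^ m = 1 → x ^ ℓ ^ t = 1) {a : K} (ha : a ≠ 0) :
    CaseIII K ℓ a ↔ ∀ n, IsPowModRoots K ℓ t n a := by
  have eq_of_pow_mul_eq {b b' ξ ξ' : K} {d : ℕ} (hd : t ≤ d) (hb' : b' ≠ 0)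
      (hξ : ξ ^ ℓ ^ t = 1) (hξ' : ξ' ^ ℓ ^ t = 1) (h : b ^ ℓ ^ d * ξ = b' ^ ℓ ^ d * ξ') :
      ξ' = ξ := by
    obtain ⟨u, hu, rfl⟩ := exists_eq_mul_pow_of_pow_mul_eq_pow_mul hμ hb' hξ hξ' h
    rw [pow_prime_pow_eq_one_of_le hd hu, mul_one]
  constructor
  · rintro ⟨ξ, ⟨r, hr⟩, hdiv, -⟩ n
    obtain ⟨c, hc⟩ := hdiv n
    have hξ0 := hr.ne_zero (pow_ne_zero r hℓ.ne_zero)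
    exact ⟨c, ξ⁻¹, by rw [inv_pow, hμ ξ r hr.pow_eq_one, inv_one], by rw [hc]; field_simp⟩
  · intro h
    obtain ⟨c, η, hη, hc⟩ := h t
    have hη0 := ne_zero_of_pow_eq_one (pow_ne_zero t hℓ.ne_zero) hη
    have hc0 : c ≠ 0 := by
      rintro rfl
      rw [zero_pow (pow_ne_zero t hℓ.ne_zero), zero_mul] at hc
      exact ha hc
    refine ⟨η⁻¹, exists_isPrimitiveRoot_of_pow_prime_pow_eq_one hℓ (by rw [inv_pow, hη, inv_one]),
      fun n => ?_, fun ξ' ⟨r', hr'⟩ hdiv' => ?_⟩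
    · obtain ⟨c', η', hη', hc'⟩ := h (n + t)
      have hηη' : η = η' := eq_of_pow_mul_eq le_rfl hc0 hη' hη (by
        rw [← pow_mul, ← pow_add, ← hc', hc])
      exact ⟨c' ^ ℓ ^ t, by rw [hc', ← hηη', ← pow_mul, ← pow_add, add_comm]; field_simp⟩
    · obtain ⟨v, hv⟩ := hdiv' t
      have hξ'0 := hr'.ne_zero (pow_ne_zero r' hℓ.ne_zero)
      have hξ'η : η = ξ'⁻¹ := eq_of_pow_mul_eq le_rfl hc0
        (by rw [inv_pow, hμ ξ' r' hr'.pow_eq_one, inv_one]) hη (by rw [hv, ← hc]; field_simp)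
      rw [hξ'η, inv_inv]

theorem caseI_iff (hℓ : ℓ.Prime) (hμ : ∀ x : K, ∀ m : ℕ, x ^ ℓ ^ m = 1 → x ^ ℓ ^ t = 1)
    {ζ b ξ : K} {d : ℕ} (hζ : IsPrimitiveRoot ζ (ℓ ^ t)) (hb : StronglyIndivisible K ℓ b)
    (hξ : ξ ^ ℓ ^ t = 1) :
    CaseI K ℓ (b ^ ℓ ^ d * ξ) ↔ ξ ^ ℓ ^ (t - d) = 1 := by
  constructor
  · rintro ⟨d₁, ⟨b₁, hb₁, h₁⟩, -⟩
    obtain ⟨rfl, u, hu, hξu⟩ := hb.eq_and_exists_of_pow_mul_eq_pow_mul hℓ hμ hb₁ hξ (one_pow _)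
      (by rw [h₁, mul_one])
    have := congrArg (· ^ ℓ ^ (t - d₁)) hξu
    simpa only [one_pow, mul_pow, pow_prime_pow_pow_sub_eq_one d₁ hu, mul_one] using this.symm
  · intro hξd
    obtain ⟨η, hη, rfl⟩ := hζ.exists_eq_pow_of_pow_pow_sub_eq_one hℓ hξd
    have hbη := hb.mul_of_pow_eq_one (pow_pos hℓ.pos t) hη
    refine ⟨d, ⟨b * η, hbη, (mul_pow b η _).symm⟩, fun d' b' hb' h' => ?_⟩
    refine (hbη.eq_and_exists_of_pow_mul_eq_pow_mul hℓ hμ hb' (one_pow _) (one_pow _) ?_).1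
    rw [mul_one, mul_one, ← h', mul_pow]

theorem caseII_iff (hℓ : ℓ.Prime) (hμ : ∀ x : K, ∀ m : ℕ, x ^ ℓ ^ m = 1 → x ^ ℓ ^ t = 1)
    {b ξ : K} {d : ℕ} (hb : StronglyIndivisible K ℓ b) (hξ : ξ ^ ℓ ^ t = 1) :
    CaseII K ℓ t (b ^ ℓ ^ d * ξ) ↔ ξ ^ ℓ ^ (t - d) ≠ 1 := by
  constructor
  · rintro ⟨d₂, r₂, -, hr₂, ⟨b₂, ξ₂, hb₂, hξ₂, h₂⟩, -⟩ hξd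
    obtain ⟨rfl, u, hu, rfl⟩ := hb.eq_and_exists_of_pow_mul_eq_pow_mul hℓ hμ hb₂ hξ
      (hμ _ r₂ hξ₂.pow_eq_one) h₂
    have : (ξ * u ^ ℓ ^ d₂) ^ ℓ ^ (t - d₂) = 1 := by
      rw [mul_pow, hξd, pow_prime_pow_pow_sub_eq_one d₂ hu, mul_one]
    have := (Nat.pow_dvd_pow_iff_le_right hℓ.one_lt).mp ((hξ₂.pow_eq_one_iff_dvd _).mp this)
    omega
  · intro hξd
    obtain ⟨r, hr⟩ := exists_isPrimitiveRoot_of_pow_prime_pow_eq_one hℓ hξ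
    have hdr : t - d < r := by
      by_contra! hrd
      exact hξd (pow_prime_pow_eq_one_of_le hrd hr.pow_eq_one)
    have hd : 0 < d := by
      by_contra! hd0
      rw [Nat.le_zero.mp hd0, Nat.sub_zero] at hξd
      exact hξd hξ
    refine ⟨d, r, hd, hdr, ⟨b, ξ, hb, hr, rfl⟩, fun d' r' b' ξ' _ _ hb' hr' h' => ?_⟩
    obtain ⟨rfl, u, hu, rfl⟩ := hb.eq_and_exists_of_pow_mul_eq_pow_mul hℓ hμ hb' hξ
      (hμ _ r' hr'.pow_eq_one) h'
    -- `u ^ ℓ ^ d'` has order dividing `ℓ ^ (t - d') < ℓ ^ r`, so it cannot change the order of `ξ`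
    have := hr.mul_of_pow_prime_pow_eq_one hℓ (pow_prime_pow_pow_sub_eq_one d' hu) hdr
    exact ⟨rfl, Nat.pow_right_injective hℓ.two_le (hr'.unique this)⟩

end RootsOfUnity

theorem stmt_5_general (K : Type*) [Field K] (ℓ : ℕ) (hℓ : ℓ.Prime)
    (t : ℕ) (ht : ∃ ζ : K, IsPrimitiveRoot ζ (ℓ ^ t))
    (htg : ∀ u : ℕ, (∃ ζ : K, IsPrimitiveRoot ζ (ℓ ^ u)) → u ≤ t)
    (a : K) (ha : a ≠ 0) :
    (CaseI K ℓ a ∧ ¬ CaseII K ℓ t a ∧ ¬ CaseIII K ℓ a) ∨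
    (¬ CaseI K ℓ a ∧ CaseII K ℓ t a ∧ ¬ CaseIII K ℓ a) ∨
    (¬ CaseI K ℓ a ∧ ¬ CaseII K ℓ t a ∧ CaseIII K ℓ a) := by
  obtain ⟨ζ, hζ⟩ := ht
  have hμ : ∀ x : K, ∀ m : ℕ, x ^ ℓ ^ m = 1 → x ^ ℓ ^ t = 1 := fun x m hx =>
    pow_prime_pow_eq_one_of_forall_le hℓ htg hx
  by_cases hdiv : ∀ n, IsPowModRoots K ℓ t n a
  · refine Or.inr (Or.inr ⟨?_, ?_, (caseIII_iff hℓ hμ ha).mpr hdiv⟩)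
    · rintro ⟨d, ⟨b, hb, rfl⟩, -⟩
      exact hb.not_isPowModRoots_succ hℓ hμ (one_pow _) d (by simpa using hdiv (d + 1))
    · rintro ⟨d, r, -, -, ⟨b, ξ, hb, hξ, rfl⟩, -⟩
      exact hb.not_isPowModRoots_succ hℓ hμ (hμ ξ r hξ.pow_eq_one) d (hdiv (d + 1))
  obtain ⟨d, b, ξ, hb, hξ, rfl⟩ :=
    exists_stronglyIndivisible_of_not_forall_isPowModRoots hℓ hμ hdiv
  have hIII : ¬ CaseIII K ℓ (b ^ ℓ ^ d * ξ) := fun h => hdiv ((caseIII_iff hℓ hμ ha).mp h)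
  by_cases hξd : ξ ^ ℓ ^ (t - d) = 1
  · exact Or.inl ⟨(caseI_iff hℓ hμ hζ hb hξ).mpr hξd,
      fun h => (caseII_iff hℓ hμ hb hξ).mp h hξd, hIII⟩
  · exact Or.inr (Or.inl ⟨fun h => hξd ((caseI_iff hℓ hμ hζ hb hξ).mp h),
      (caseII_iff hℓ hμ hb hξ).mpr hξd, hIII⟩)

theorem stmt_5 (K : Type*) [Field K] (ℓ : ℕ) (hℓ : ℓ.Prime) (hchar : (ℓ : K) ≠ 0)
    (hKl : ∃ ζ : K, IsPrimitiveRoot ζ ℓ)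
    (hKinf : ¬ ∀ m : ℕ, ∃ ζ : K, IsPrimitiveRoot ζ (ℓ ^ m))
    (t : ℕ) (ht0 : 0 < t) (ht : ∃ ζ : K, IsPrimitiveRoot ζ (ℓ ^ t))
    (htg : ∀ u : ℕ, (∃ ζ : K, IsPrimitiveRoot ζ (ℓ ^ u)) → u ≤ t)
    (a : K) (ha : a ≠ 0) :
    (CaseI K ℓ a ∧ ¬ CaseII K ℓ t a ∧ ¬ CaseIII K ℓ a) ∨
    (¬ CaseI K ℓ a ∧ CaseII K ℓ t a ∧ ¬ CaseIII K ℓ a) ∨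
    (¬ CaseI K ℓ a ∧ ¬ CaseII K ℓ t a ∧ CaseIII K ℓ a) :=
  stmt_5_general K ℓ hℓ t ht htg a ha
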